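/- arXiv:2510.22512 — 3 statements merged into one kernel-verified Lean document; each statement's English description precedes it below -/
import Mathlib

section
/- Define B : ℕ → ℝ recursively by B(1) = 0 and, for n ≥ 2, B(n) = 1 + (1/(n-1)) · Σ_{k=1}^{n-1} max(B(k), B(n-k)). Then for all n ≥ 1, B(n) ≤ log n / log(4/3). -/
/-!
Strong induction on `n`. The terms of the recursion are bounded by
`log (max k (n - k)) / log (4/3)`, and the `n - 1` values `max k (n - k)` have mean at most
`3n/4`. Since `log` is concave (it lies below its tangent line at `3n/4`), the mean of their
logarithms is at most `log (3n/4) = log n - log (4/3)`, which exactly absorbs the `1` in the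
recursion.
-/

open Finset Real

theorem four_mul_sum_range_max_le :
    ∀ n : ℕ, 4 * ∑ k ∈ range (n + 1), max k (n - k) ≤ 3 * n ^ 2 + 5 * n
  | 0 => by simp
  | 1 => by decide
  | n + 2 => by
    have hshift : ∑ k ∈ range (n + 1), max (k + 1) (n + 2 - (k + 1))
        = ∑ k ∈ range (n + 1), (max k (n - k) + 1) :=
      sum_congr rfl fun k hk => by rw [mem_range] at hk; omega
    have := four_mul_sum_range_max_le n
    rw [sum_range_succ', sum_range_succ, hshift, sum_add_distrib, sum_const, card_range,
      smul_eq_mul, mul_one]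
    simp only [Nat.sub_zero, Nat.sub_self, zero_le, max_eq_left, max_eq_right]
    nlinarith

theorem four_mul_sum_Icc_max_le (n : ℕ) :
    4 * ∑ k ∈ Icc 1 (n - 1), max k (n - k) ≤ 3 * n * (n - 1) := by
  rcases n with _ | _ | n
  · simp
  · simp
  · have hshift : ∑ k ∈ Icc 1 (n + 1), max k (n + 2 - k)
        = ∑ k ∈ range (n + 1), (max k (n - k) + 1) := by
      rw [← Finset.Ico_add_one_right_eq_Icc, sum_Ico_eq_sum_range]
      exact sum_congr rfl fun k hk => by rw [mem_range] at hk; omega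
    have := four_mul_sum_range_max_le n
    rw [Nat.add_sub_cancel, hshift, sum_add_distrib, sum_const, card_range, smul_eq_mul, mul_one]
    nlinarith

theorem sum_log_le_card_mul_log {ι : Type*} {s : Finset ι} {x : ι → ℝ} {a : ℝ} (ha : 0 < a)
    (hx : ∀ i ∈ s, 0 < x i) (hsum : ∑ i ∈ s, x i ≤ #s * a) :
    ∑ i ∈ s, log (x i) ≤ #s * log a := by
  -- tangent line of `log` at `a`
  have htangent : ∀ i ∈ s, log (x i) ≤ log a + (x i / a - 1) := fun i hi => by
    have := log_le_sub_one_of_pos (div_pos (hx i hi) ha)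
    rw [log_div (hx i hi).ne' ha.ne'] at this
    linarith
  have hmean : (∑ i ∈ s, x i) / a ≤ #s := (div_le_iff₀ ha).2 hsum
  calc ∑ i ∈ s, log (x i) ≤ ∑ i ∈ s, (log a + (x i / a - 1)) := sum_le_sum htangent
    _ = #s * log a + ((∑ i ∈ s, x i) / a - #s) := by
      simp only [sum_add_distrib, sum_sub_distrib, ← sum_div, sum_const, nsmul_eq_mul, mul_one]
    _ ≤ #s * log a := by linarith

theorem sum_log_max_le (n : ℕ) (hn : 1 ≤ n) :
    ∑ k ∈ Icc 1 (n - 1), log (max (k : ℝ) (n - k : ℕ)) ≤ ((n : ℝ) - 1) * log (3 * n / 4) := by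
  have hcard : (#(Icc 1 (n - 1)) : ℝ) = n - 1 := by simp [Nat.cast_sub hn]
  have hsum : 4 * ∑ k ∈ Icc 1 (n - 1), max (k : ℝ) (n - k : ℕ) ≤ 3 * n * ((n : ℝ) - 1) := by
    have h := four_mul_sum_Icc_max_le n
    rify [hn] at h
    exact h
  rw [← hcard]
  refine sum_log_le_card_mul_log (by positivity) (fun k hk => ?_) (by rw [hcard]; linarith)
  rw [mem_Icc] at hk
  exact lt_max_of_lt_left (by exact_mod_cast hk.1)

theorem stmt_4 (B : ℕ → ℝ) (hB1 : B 1 = 0)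
    (hBrec : ∀ n, 2 ≤ n →
      B n = 1 + (1 / ((n : ℝ) - 1)) * ∑ k ∈ Finset.Icc 1 (n - 1), max (B k) (B (n - k))) :
    ∀ n, 1 ≤ n → B n ≤ Real.log n / Real.log (4 / 3) := by
  have hc : 0 < log (4 / 3) := log_pos (by norm_num)
  intro n
  induction n using Nat.strong_induction_on with | _ n ih => ?_
  intro hn
  rcases hn.eq_or_lt with rfl | hn2
  · simp [hB1]
  have hterm : ∀ k ∈ Icc 1 (n - 1),
      max (B k) (B (n - k)) ≤ log (max (k : ℝ) (n - k : ℕ)) / log (4 / 3) := fun k hk => by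
    rw [mem_Icc] at hk
    have hk_pos : (0 : ℝ) < k := by exact_mod_cast hk.1
    have hnk_pos : (0 : ℝ) < (n - k : ℕ) := by exact_mod_cast Nat.sub_pos_of_lt (by omega)
    exact max_le ((ih k (by omega) hk.1).trans (by gcongr; exact le_max_left _ _))
      ((ih (n - k) (by omega) (by omega)).trans (by gcongr; exact le_max_right _ _))
  have hsum : ∑ k ∈ Icc 1 (n - 1), max (B k) (B (n - k))
      ≤ ((n : ℝ) - 1) * log (3 * n / 4) / log (4 / 3) := by
    refine (sum_le_sum hterm).trans ?_
    rw [← sum_div]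
    gcongr
    exact sum_log_max_le n hn
  have hlog : log (3 * n / 4) = log n - log (4 / 3) := by
    rw [show (3 * n / 4 : ℝ) = n / (4 / 3) by ring, log_div (by positivity) (by norm_num)]
  have hn1 : (0 : ℝ) < n - 1 := by
    rw [sub_pos]; exact_mod_cast hn2
  rw [hBrec n hn2]
  calc 1 + 1 / ((n : ℝ) - 1) * ∑ k ∈ Icc 1 (n - 1), max (B k) (B (n - k))
      ≤ 1 + 1 / ((n : ℝ) - 1) * (((n : ℝ) - 1) * log (3 * n / 4) / log (4 / 3)) := by gcongr
    _ = log n / log (4 / 3) := by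
      rw [hlog]; field_simp; ring
end

section
/- Define B : ℕ → ℝ by B(1) = 0 and B(n) = 1 + (1/(n-1)) · Σ_{k=1}^{n-1} max(B(k), B(n-k)) for n ≥ 2. Then B is monotone nondecreasing on positive integers. -/
/-!
Write `S n = ∑_{k=1}^{n-1} max (B k) (B (n - k)) = (n - 1) (B n - 1)`. If `B` is monotone on
`[1, n]`, then each summand of `S n` is at most the corresponding summand of `S (n + 1)`, and the
extra summand `max (B n) (B 1)` of `S (n + 1)` equals `B n`. Hence `S (n + 1) ≥ S n + B n`, which
rearranges to `n (B (n + 1) - B n) ≥ 1`; so monotonicity propagates from `[1, n]` to `[1, n + 1]`.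
-/

def SatisfiesSubgoalRecursion (B : ℕ → ℝ) : Prop :=
  ∀ n, 2 ≤ n → B n = 1 + (1 / ((n : ℝ) - 1)) * ∑ k ∈ Finset.Icc 1 (n - 1), max (B k) (B (n - k))

namespace SatisfiesSubgoalRecursion

variable {B : ℕ → ℝ}

lemma sub_one_mul_sub_one_eq_sum_max (hB : SatisfiesSubgoalRecursion B) {n : ℕ} (hn : 1 ≤ n) :
    ((n : ℝ) - 1) * (B n - 1) = ∑ k ∈ Finset.Ico 1 n, max (B k) (B (n - k)) := by
  obtain rfl | hn2 : n = 1 ∨ 2 ≤ n := by omega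
  · simp
  · have hne : (n : ℝ) - 1 ≠ 0 := sub_ne_zero.2 (by exact_mod_cast (by omega : n ≠ 1))
    rw [hB n hn2, ← Finset.Icc_sub_one_right_eq_Ico_of_not_isMin (by simp; omega)]
    field_simp
    ring

lemma one_le_mul_sub_of_monotoneOn (hB : SatisfiesSubgoalRecursion B) {n : ℕ} (hn : 1 ≤ n)
    (hmono : MonotoneOn B (Set.Icc 1 n)) :
    1 ≤ (n : ℝ) * (B (n + 1) - B n) := by
  have hsucc := hB.sub_one_mul_sub_one_eq_sum_max (Nat.le_add_left 1 n)
  have hprev := hB.sub_one_mul_sub_one_eq_sum_max hn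
  rw [Finset.sum_Ico_succ_top hn, Nat.add_sub_cancel_left,
    max_eq_left (hmono ⟨le_rfl, hn⟩ ⟨hn, le_rfl⟩ hn)] at hsucc
  have hsum : ∑ k ∈ Finset.Ico 1 n, max (B k) (B (n - k)) ≤
      ∑ k ∈ Finset.Ico 1 n, max (B k) (B (n + 1 - k)) := by
    refine Finset.sum_le_sum fun k hk => max_le_max le_rfl (hmono ?_ ?_ ?_) <;>
      simp only [Finset.mem_Ico, Set.mem_Icc] at hk ⊢ <;> omega
  push_cast at hsucc
  linarith

lemma monotoneOn_Icc_one (hB : SatisfiesSubgoalRecursion B) (n : ℕ) :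
    MonotoneOn B (Set.Icc 1 n) := by
  induction n with
  | zero => exact (Set.subsingleton_Icc_of_ge zero_le_one).monotoneOn B
  | succ n ih =>
    refine monotoneOn_of_le_add_one Set.ordConnected_Icc fun a _ ha ha' => ?_
    obtain ha_lt | rfl : a < n ∨ a = n := by simp only [Set.mem_Icc] at ha'; omega
    · exact ih ⟨ha.1, ha_lt.le⟩ ⟨by omega, ha_lt⟩ (Nat.le_succ a)
    · have hpos : (0 : ℝ) < a := by exact_mod_cast ha.1
      nlinarith [hB.one_le_mul_sub_of_monotoneOn ha.1 ih]

end SatisfiesSubgoalRecursion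

theorem stmt_5_general (B : ℕ → ℝ)
    (hBrec : ∀ n, 2 ≤ n →
      B n = 1 + (1 / ((n : ℝ) - 1)) * ∑ k ∈ Finset.Icc 1 (n - 1), max (B k) (B (n - k))) :
    ∀ m n, 1 ≤ m → m ≤ n → B m ≤ B n := fun _ n hm hmn =>
  SatisfiesSubgoalRecursion.monotoneOn_Icc_one hBrec n ⟨hm, hmn⟩ ⟨hm.trans hmn, le_rfl⟩ hmn

theorem stmt_5 (B : ℕ → ℝ) (hB1 : B 1 = 0)
    (hBrec : ∀ n, 2 ≤ n →
      B n = 1 + (1 / ((n : ℝ) - 1)) * ∑ k ∈ Finset.Icc 1 (n - 1), max (B k) (B (n - k))) :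
    ∀ m n, 1 ≤ m → m ≤ n → B m ≤ B n :=
  stmt_5_general B hBrec
end

section
/- Define B : ℕ → ℝ by B(1) = 0 and B(n) = 1 + (1/(n-1)) Σ_{k=1}^{n-1} max(B(k), B(n-k)) for n ≥ 2. Then B(n) ≥ log₂ n for all n ≥ 1. -/
/-!
Strong induction on `n`. For `1 ≤ k ≤ n - 1` one of `k`, `n - k` is at least `n / 2`, so by the
induction hypothesis `max (B k) (B (n - k)) ≥ log₂ (n / 2) = log₂ n - 1`. Every term of the average
in the recursion is thus at least `log₂ n - 1`, and the leading `1` restores `log₂ n`.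
-/

lemma logb_two_le_logb_max_add_one {n k : ℕ} (hk : k ≤ n) :
    Real.logb 2 n ≤ Real.logb 2 (max k (n - k) : ℕ) + 1 := by
  rcases Nat.eq_zero_or_pos n with rfl | hn
  · obtain rfl : k = 0 := Nat.le_zero.mp hk
    simp
  have hhalf : (n : ℝ) / 2 ≤ (max k (n - k) : ℕ) := by
    rw [div_le_iff₀ two_pos]
    exact_mod_cast (by omega : n ≤ max k (n - k) * 2)
  have hlog : Real.logb 2 ((n : ℝ) / 2) = Real.logb 2 n - 1 := by
    rw [Real.logb_div (by positivity) two_ne_zero, Real.logb_self_eq_one one_lt_two]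
  have := Real.logb_le_logb_of_le one_lt_two (by positivity) hhalf
  linarith

lemma logb_two_sub_one_le_max_of_logb_le {B : ℕ → ℝ} {n k : ℕ} (hk : k ≤ n)
    (hBk : Real.logb 2 k ≤ B k) (hBnk : Real.logb 2 (n - k : ℕ) ≤ B (n - k)) :
    Real.logb 2 n - 1 ≤ max (B k) (B (n - k)) := by
  have := logb_two_le_logb_max_add_one hk
  rcases max_choice k (n - k) with h | h <;> rw [h] at this
  · linarith [le_max_left (B k) (B (n - k))]
  · linarith [le_max_right (B k) (B (n - k))]

lemma le_inv_card_mul_sum {ι : Type*} {s : Finset ι} (hs : s.Nonempty) {f : ι → ℝ} {c : ℝ}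
    (hf : ∀ i ∈ s, c ≤ f i) : c ≤ (1 / (s.card : ℝ)) * ∑ i ∈ s, f i := by
  have hcard : (0 : ℝ) < s.card := by exact_mod_cast hs.card_pos
  rw [one_div_mul_eq_div, le_div_iff₀ hcard, mul_comm]
  simpa using Finset.card_nsmul_le_sum s f c hf

theorem stmt_17 (B : ℕ → ℝ) (hB1 : B 1 = 0)
    (hBrec : ∀ n, 2 ≤ n →
      B n = 1 + (1 / ((n : ℝ) - 1)) * ∑ k ∈ Finset.Icc 1 (n - 1), max (B k) (B (n - k))) :
    ∀ n : ℕ, 1 ≤ n → Real.logb 2 n ≤ B n := by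
  intro n
  induction n using Nat.strong_induction_on with
  | _ n ih =>
    intro hn
    rcases hn.eq_or_lt with rfl | hn2
    · simp [hB1]
    have hcard : ((Finset.Icc 1 (n - 1)).card : ℝ) = (n : ℝ) - 1 := by
      rw [Nat.card_Icc, Nat.add_sub_cancel, Nat.cast_pred (by omega)]
    have havg : Real.logb 2 n - 1 ≤
        (1 / ((n : ℝ) - 1)) * ∑ k ∈ Finset.Icc 1 (n - 1), max (B k) (B (n - k)) := by
      rw [← hcard]
      refine le_inv_card_mul_sum ⟨1, by simp; omega⟩ fun k hk => ?_
      rw [Finset.mem_Icc] at hk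
      exact logb_two_sub_one_le_max_of_logb_le (by omega) (ih k (by omega) hk.1) (ih (n - k) (by omega) (by omega))
    rw [hBrec n hn2]
    linarith
end
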